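/- Regression-adjustment identification (Theorem 1, RA part): under Assumptions SO, NA, and DDD-CPT, for every g ∈ 𝒢_trt, every t with g ≤ t ≤ T, and every g_c ∈ 𝒮 with g_c > t, ATT(g,t) = E[Y_t − Y_{g−1} − m^{g,0}(X) − m^{g_c,1}(X) + m^{g_c,0}(X) | S=g, Q=1], equivalently ATT(g,t) = E[w_trt·(Y_t − Y_{g−1} − m^{g,0}(X) − m^{g_c,1}(X) + m^{g_c,0}(X))]. -/

import Mathlib

open MeasureTheory ProbabilityTheory

namespace TripleDiff

/-- A staggered triple-differences (DDD) setup: a probability space carrying an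
enabling-group variable `S` with values in a finite set `𝒮 ⊆ {2,…,T} ∪ {∞}`
(`∞` is coded as `⊤ : ℕ∞`), an eligibility indicator `Q ∈ {0,1}`, covariates
`X ∈ ℝ^d`, and integrable potential outcomes `Y_t(g)`, with every cell
`{S = g, Q = q}` having positive probability. -/
structure Setup (Ω : Type*) [MeasurableSpace Ω] (d : ℕ) where
  /-- the underlying probability measure -/
  μ : Measure Ω
  isProb : IsProbabilityMeasure μ
  /-- the number of time periods -/
  T : ℕ
  hT : 2 ≤ T
  /-- the (finite) support of the enabling variable -/
  𝒮 : Finset ℕ∞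
  h𝒮 : ∀ g ∈ 𝒮, g ≠ ⊤ → ∃ n : ℕ, 2 ≤ n ∧ n ≤ T ∧ g = (n : ℕ∞)
  htop : (⊤ : ℕ∞) ∈ 𝒮
  /-- enabling group: first period at which treatment is enabled -/
  S : Ω → ℕ∞
  hS : Measurable S
  hSmem : ∀ ω, S ω ∈ 𝒮
  /-- eligibility indicator -/
  Q : Ω → ℕ
  hQ : Measurable Q
  hQval : ∀ ω, Q ω ≤ 1
  /-- covariates -/
  X : Ω → Fin d → ℝ
  hX : Measurable X
  /-- potential outcomes `Y_t(g)` -/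
  Ypo : ℕ∞ → ℕ → Ω → ℝ
  hYpo : ∀ g ∈ 𝒮, ∀ t : ℕ, 1 ≤ t → t ≤ T → Integrable (Ypo g t) μ
  hcells : ∀ g ∈ 𝒮, ∀ q ≤ 1, 0 < μ {ω | S ω = g ∧ Q ω = q}

namespace Setup

variable {Ω : Type*} [MeasurableSpace Ω] {d : ℕ} (E : Setup Ω d)

/-- the cell `{S = g, Q = q}` -/
def cell (g : ℕ∞) (q : ℕ) : Set Ω := {ω | E.S ω = g ∧ E.Q ω = q}

/-- first treatment period: `G = S` if `Q = 1` and `G = ∞` if `Q = 0` -/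
def G (ω : Ω) : ℕ∞ := if E.Q ω = 1 then E.S ω else ⊤

/-- observed outcome `Y_t = Σ_g 1{G = g} Y_t(g)` -/
def Yobs (t : ℕ) (ω : Ω) : ℝ := E.Ypo (E.G ω) t ω

/-- the σ-algebra generated by the covariates `X` -/
def mX : MeasurableSpace Ω := MeasurableSpace.comap E.X inferInstance

/-- conditional cell probability `P(S = g, Q = q | X)` given `σ(X)` -/
noncomputable def pX (g : ℕ∞) (q : ℕ) : Ω → ℝ :=
  (E.μ)[(E.cell g q).indicator (fun _ => (1 : ℝ)) | E.mX]

/-- group-time average treatment effect `ATT(g,t) = E[Y_t(g) − Y_t(∞) | S = g, Q = 1]` -/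
noncomputable def ATT (g t : ℕ) : ℝ :=
  ∫ ω, (E.Ypo (g : ℕ∞) t ω - E.Ypo ⊤ t ω) ∂((E.μ)[|E.cell (g : ℕ∞) 1])

/-- outcome-regression nuisance `m^{g',q'}(X) = E[Y_t − Y_{g−1} | S = g', Q = q', X]`,
for the fixed pair `(g,t)` -/
noncomputable def mReg (g t : ℕ) (g' : ℕ∞) (q' : ℕ) : Ω → ℝ :=
  ((E.μ)[|E.cell g' q'])[fun ω => E.Yobs t ω - E.Yobs (g - 1) ω | E.mX]

/-- treated weight `w_trt = 1{S = g, Q = 1} / E[1{S = g, Q = 1}]` -/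
noncomputable def wTrt (g : ℕ) : Ω → ℝ := fun ω =>
  (E.cell (g : ℕ∞) 1).indicator (fun _ => (1 : ℝ)) ω / (E.μ (E.cell (g : ℕ∞) 1)).toReal

/-- unnormalized comparison (odds) weight `1{S = g', Q = q'}·p^{g,1}(X)/p^{g',q'}(X)` -/
noncomputable def oddsW (g : ℕ) (g' : ℕ∞) (q' : ℕ) : Ω → ℝ := fun ω =>
  (E.cell g' q').indicator (fun _ => (1 : ℝ)) ω * E.pX (g : ℕ∞) 1 ω / E.pX g' q' ω

/-- normalized comparison weight `w_{g',q'}` -/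
noncomputable def wComp (g : ℕ) (g' : ℕ∞) (q' : ℕ) : Ω → ℝ := fun ω =>
  E.oddsW g g' q' ω / ∫ ω', E.oddsW g g' q' ω' ∂E.μ

/-- doubly robust DDD estimand `ATT_dr,g_c(g,t)` with comparison group `g_c` -/
noncomputable def ATTdr (g t : ℕ) (gc : ℕ∞) : ℝ :=
  (∫ ω, (E.wTrt g ω - E.wComp g (g : ℕ∞) 0 ω) *
      (E.Yobs t ω - E.Yobs (g - 1) ω - E.mReg g t (g : ℕ∞) 0 ω) ∂E.μ)
  + (∫ ω, (E.wTrt g ω - E.wComp g gc 1 ω) *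
      (E.Yobs t ω - E.Yobs (g - 1) ω - E.mReg g t gc 1 ω) ∂E.μ)
  - (∫ ω, (E.wTrt g ω - E.wComp g gc 0 ω) *
      (E.Yobs t ω - E.Yobs (g - 1) ω - E.mReg g t gc 0 ω) ∂E.μ)

/-- Assumption SO (strong overlap): there is `ε > 0` with
`P(S = g, Q = q | X) > ε` a.s. for every cell. -/
def StrongOverlap : Prop :=
  ∃ ε > (0 : ℝ), ∀ g ∈ E.𝒮, ∀ q ≤ 1, ∀ᵐ ω ∂E.μ, ε < E.pX g q ω

/-- Assumption NA (no anticipation): for every treated group `g` and every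
pre-treatment period `t < g`,
`E[Y_t(g) | S = g, Q = 1, X] = E[Y_t(∞) | S = g, Q = 1, X]` a.s. -/
def NoAnticipation : Prop :=
  ∀ g : ℕ, (g : ℕ∞) ∈ E.𝒮 → ∀ t : ℕ, 1 ≤ t → t < g →
    ((E.μ)[|E.cell (g : ℕ∞) 1])[E.Ypo (g : ℕ∞) t | E.mX]
      =ᵐ[E.μ] ((E.μ)[|E.cell (g : ℕ∞) 1])[E.Ypo ⊤ t | E.mX]

/-- Assumption DDD-CPT (conditional DDD parallel trends): for each treated group
`g`, each `g' ∈ 𝒮` and period `t` with `t ≥ g` and `g' > max{g,t}`, a.s.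
`E[ΔY_t(∞)|S=g,Q=1,X] − E[ΔY_t(∞)|S=g,Q=0,X]
  = E[ΔY_t(∞)|S=g',Q=1,X] − E[ΔY_t(∞)|S=g',Q=0,X]`. -/
def ParallelTrends : Prop :=
  ∀ g : ℕ, (g : ℕ∞) ∈ E.𝒮 → ∀ g' ∈ E.𝒮, ∀ t : ℕ, g ≤ t → t ≤ E.T →
    max (g : ℕ∞) (t : ℕ∞) < g' →
    (fun ω =>
        (((E.μ)[|E.cell (g : ℕ∞) 1])[fun ω' => E.Ypo ⊤ t ω' - E.Ypo ⊤ (t - 1) ω' | E.mX]) ω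
          - (((E.μ)[|E.cell (g : ℕ∞) 0])[fun ω' => E.Ypo ⊤ t ω' - E.Ypo ⊤ (t - 1) ω' | E.mX]) ω)
      =ᵐ[E.μ]
    (fun ω =>
        (((E.μ)[|E.cell g' 1])[fun ω' => E.Ypo ⊤ t ω' - E.Ypo ⊤ (t - 1) ω' | E.mX]) ω
          - (((E.μ)[|E.cell g' 0])[fun ω' => E.Ypo ⊤ t ω' - E.Ypo ⊤ (t - 1) ω' | E.mX]) ω)

end Setup

end TripleDiff

namespace TripleDiff
namespace Setup

variable {Ω : Type*} [MeasurableSpace Ω] {d : ℕ} (E : Setup Ω d)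

lemma measurableSet_cell (g' : ℕ∞) (q' : ℕ) : MeasurableSet (E.cell g' q') := by
  have h : E.cell g' q' = E.S ⁻¹' {g'} ∩ E.Q ⁻¹' {q'} := by
    ext ω; simp [cell]
  rw [h]
  exact (E.hS (measurableSet_singleton _)).inter (E.hQ (measurableSet_singleton _))

lemma mX_le : E.mX ≤ ‹MeasurableSpace Ω› := E.hX.comap_le

lemma cell_ne_zero (g' : ℕ∞) (hg' : g' ∈ E.𝒮) (q' : ℕ) (hq' : q' ≤ 1) :
    E.μ (E.cell g' q') ≠ 0 := (E.hcells g' hg' q' hq').ne'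

lemma cond_cell_prob (g' : ℕ∞) (hg' : g' ∈ E.𝒮) (q' : ℕ) (hq' : q' ≤ 1) :
    IsProbabilityMeasure (E.μ[|E.cell g' q']) := by
  haveI := E.isProb
  exact ProbabilityTheory.cond_isProbabilityMeasure (E.cell_ne_zero g' hg' q' hq')

lemma integrable_cond_of_integrable {f : Ω → ℝ} (hf : Integrable f E.μ) {s : Set Ω}
    (hs : E.μ s ≠ 0) : Integrable f (E.μ[|s]) := by
  haveI := E.isProb
  exact hf.restrict.smul_measure (ENNReal.inv_ne_top.2 hs)

lemma ae_cond_mem {s : Set Ω} (hs : MeasurableSet s) : ∀ᵐ ω ∂(E.μ[|s]), ω ∈ s := by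
  rw [Filter.eventually_iff, mem_ae_iff]
  have h : {ω | ω ∈ s}ᶜ = sᶜ := rfl
  rw [h, ProbabilityTheory.cond_apply hs]
  simp

lemma null_of_cond_null (g' : ℕ∞) (hg' : g' ∈ E.𝒮) (q' : ℕ) (hq' : q' ≤ 1)
    {ε : ℝ} (hε : 0 < ε) (hp : ∀ᵐ ω ∂E.μ, ε < E.pX g' q' ω)
    {N : Set Ω} (hN : MeasurableSet[E.mX] N) (h0 : (E.μ[|E.cell g' q']) N = 0) :
    E.μ N = 0 := by
  haveI := E.isProb
  have hAm : MeasurableSet (E.cell g' q') := E.measurableSet_cell g' q'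
  have hNm : MeasurableSet N := E.mX_le N hN
  have hrs : E.μ (E.cell g' q' ∩ N) = 0 := by
    rw [ProbabilityTheory.cond_apply hAm] at h0
    rcases mul_eq_zero.1 h0 with h | h
    · exact absurd h (by simp [ENNReal.inv_eq_zero, measure_ne_top])
    · exact h
  have hint : Integrable ((E.cell g' q').indicator (fun _ => (1:ℝ))) E.μ :=
    (integrable_const (1:ℝ)).indicator hAm
  have h1 : ∫ ω in N, E.pX g' q' ω ∂E.μ
      = ∫ ω in N, (E.cell g' q').indicator (fun _ => (1:ℝ)) ω ∂E.μ :=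
    setIntegral_condExp E.mX_le hint hN
  have h2 : ∫ ω in N, (E.cell g' q').indicator (fun _ => (1:ℝ)) ω ∂E.μ = 0 := by
    rw [setIntegral_indicator hAm, Measure.restrict_eq_zero.mpr (by rwa [Set.inter_comm] at hrs)]
    simp
  have h3 : ε * (E.μ N).toReal ≤ ∫ ω in N, E.pX g' q' ω ∂E.μ := by
    have hc : ∫ _ω in N, ε ∂E.μ = ε * (E.μ N).toReal := by
      rw [setIntegral_const, smul_eq_mul, measureReal_def]; ring
    rw [← hc]
    refine setIntegral_mono_ae (integrableOn_const)
      integrable_condExp.integrableOn ?_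
    filter_upwards [hp] with ω hω using hω.le
  rw [h1, h2] at h3
  have h4 : (E.μ N).toReal = 0 := by nlinarith [ENNReal.toReal_nonneg (a := E.μ N)]
  rcases (ENNReal.toReal_eq_zero_iff _).1 h4 with h | h
  · exact h
  · exact absurd h (measure_ne_top _ _)

lemma ae_of_cond_ae (g' : ℕ∞) (hg' : g' ∈ E.𝒮) (q' : ℕ) (hq' : q' ≤ 1)
    {ε : ℝ} (hε : 0 < ε) (hp : ∀ᵐ ω ∂E.μ, ε < E.pX g' q' ω)
    {f h : Ω → ℝ} (hf : StronglyMeasurable[E.mX] f) (hh : StronglyMeasurable[E.mX] h)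
    (hfh : f =ᵐ[E.μ[|E.cell g' q']] h) : f =ᵐ[E.μ] h := by
  have hN : MeasurableSet[E.mX] {ω | ¬ f ω = h ω} := by
    have heq : {ω | ¬ f ω = h ω} = (fun ω => f ω - h ω) ⁻¹' ({0}ᶜ) := by
      ext ω; simp [sub_eq_zero]
    rw [heq]
    exact (hf.measurable.sub hh.measurable) (measurableSet_singleton 0).compl
  have h0 : (E.μ[|E.cell g' q']) {ω | ¬ f ω = h ω} = 0 := hfh
  exact E.null_of_cond_null g' hg' q' hq' hε hp hN h0

lemma integrable_of_cond_integrable (g' : ℕ∞) (hg' : g' ∈ E.𝒮) (q' : ℕ) (hq' : q' ≤ 1)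
    {ε : ℝ} (hε : 0 < ε) (hp : ∀ᵐ ω ∂E.μ, ε < E.pX g' q' ω)
    {h : Ω → ℝ} (hm : StronglyMeasurable[E.mX] h)
    (hint : Integrable h (E.μ[|E.cell g' q'])) : Integrable h E.μ := by
  haveI := E.isProb
  have hAm : MeasurableSet (E.cell g' q') := E.measurableSet_cell g' q'
  have hA0 : E.μ (E.cell g' q') ≠ 0 := E.cell_ne_zero g' hg' q' hq'
  have hre : Integrable h (E.μ.restrict (E.cell g' q')) := by
    rw [ProbabilityTheory.cond] at hint
    exact (integrable_smul_measure (ENNReal.inv_ne_zero.2 (measure_ne_top _ _))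
      (ENNReal.inv_ne_top.2 hA0)).1 hint
  have hInd : Integrable (h * (E.cell g' q').indicator (fun _ => (1:ℝ))) E.μ := by
    have heq : h * (E.cell g' q').indicator (fun _ => (1:ℝ)) = (E.cell g' q').indicator h := by
      funext ω; by_cases hω : ω ∈ E.cell g' q' <;> simp [hω]
    rw [heq, integrable_indicator_iff hAm]
    exact hre
  have hkey := condExp_mul_of_stronglyMeasurable_left (μ := E.μ) (m := E.mX) hm hInd
      ((integrable_const (1:ℝ)).indicator hAm)
  have hint2 : Integrable (h * E.pX g' q') E.μ := integrable_condExp.congr hkey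
  refine ((hint2.norm.const_mul ε⁻¹).mono'
    ((hm.mono E.mX_le).aestronglyMeasurable) ?_)
  filter_upwards [hp] with ω hω
  have h0 : 0 < E.pX g' q' ω := lt_trans hε hω
  have habs : ‖(h * E.pX g' q') ω‖ = ‖h ω‖ * E.pX g' q' ω := by
    simp [Pi.mul_apply, abs_mul, abs_of_pos h0, Real.norm_eq_abs]
  rw [habs]
  have h2 : ε * ‖h ω‖ ≤ ‖h ω‖ * E.pX g' q' ω := by
    nlinarith [norm_nonneg (h ω)]
  have h3 : ‖h ω‖ ≤ ε⁻¹ * (‖h ω‖ * E.pX g' q' ω) := by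
    rw [le_inv_mul_iff₀ hε]
    exact h2
  exact h3

lemma G_mem (ω : Ω) : E.G ω ∈ E.𝒮 := by
  unfold G
  split
  · exact E.hSmem ω
  · exact E.htop

lemma measurable_G : Measurable E.G :=
  Measurable.ite (E.hQ (measurableSet_singleton 1)) E.hS measurable_const

lemma integrable_Yobs (t : ℕ) (ht1 : 1 ≤ t) (htT : t ≤ E.T) : Integrable (E.Yobs t) E.μ := by
  have hrep : E.Yobs t
      = fun ω => ∑ g' ∈ E.𝒮, ({ω' | E.G ω' = g'}.indicator (fun ω' => E.Ypo g' t ω')) ω := by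
    funext ω
    rw [Finset.sum_eq_single_of_mem (E.G ω) (E.G_mem ω)]
    · simp [Set.indicator_of_mem, Set.mem_setOf_eq, Yobs]
    · intro b _ hb
      exact Set.indicator_of_notMem (fun hh => hb (by exact hh.symm)) _
  rw [hrep]
  apply integrable_finset_sum
  intro g' hg'
  exact (E.hYpo g' hg' t ht1 htT).indicator (E.measurable_G (measurableSet_singleton g'))

lemma ae_Yobs_one (g' : ℕ∞) (s : ℕ) :
    ∀ᵐ ω ∂(E.μ[|E.cell g' 1]), E.Yobs s ω = E.Ypo g' s ω := by
  filter_upwards [E.ae_cond_mem (E.measurableSet_cell g' 1)] with ω hω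
  obtain ⟨hS, hQ⟩ := hω
  unfold Yobs G
  rw [if_pos hQ, hS]

lemma ae_Yobs_zero (g' : ℕ∞) (s : ℕ) :
    ∀ᵐ ω ∂(E.μ[|E.cell g' 0]), E.Yobs s ω = E.Ypo ⊤ s ω := by
  filter_upwards [E.ae_cond_mem (E.measurableSet_cell g' 0)] with ω hω
  obtain ⟨hS, hQ⟩ := hω
  unfold Yobs G
  rw [if_neg (by rw [hQ]; norm_num)]

end Setup
end TripleDiff


open TripleDiff

/-- **Regression-adjustment identification (Theorem 1, RA part).**
Under Assumptions SO, NA, and DDD-CPT, for every `g ∈ 𝒢_trt`, every `t` with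
`g ≤ t ≤ T`, and every `g_c ∈ 𝒮` with `g_c > t`,
`ATT(g,t) = E[Y_t − Y_{g−1} − m^{g,0}(X) − m^{g_c,1}(X) + m^{g_c,0}(X) | S=g, Q=1]`,
equivalently
`ATT(g,t) = E[w_trt·(Y_t − Y_{g−1} − m^{g,0}(X) − m^{g_c,1}(X) + m^{g_c,0}(X))]`. -/
theorem regression_adjustment_identification {Ω : Type*} [MeasurableSpace Ω] {d : ℕ}
    (E : Setup Ω d)
    (hSO : E.StrongOverlap) (hNA : E.NoAnticipation) (hPT : E.ParallelTrends)
    (g : ℕ) (hg : (g : ℕ∞) ∈ E.𝒮) (t : ℕ) (hgt : g ≤ t) (htT : t ≤ E.T)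
    (gc : ℕ∞) (hgc : gc ∈ E.𝒮) (hgct : (t : ℕ∞) < gc) :
    E.ATT g t
      = ∫ ω, (E.Yobs t ω - E.Yobs (g - 1) ω - E.mReg g t (g : ℕ∞) 0 ω
          - E.mReg g t gc 1 ω + E.mReg g t gc 0 ω) ∂((E.μ)[|E.cell (g : ℕ∞) 1])
    ∧ E.ATT g t
      = ∫ ω, E.wTrt g ω * (E.Yobs t ω - E.Yobs (g - 1) ω - E.mReg g t (g : ℕ∞) 0 ω
          - E.mReg g t gc 1 ω + E.mReg g t gc 0 ω) ∂E.μ := by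
  classical
  haveI := E.isProb
  obtain ⟨ε, hε, hSOa⟩ := hSO
  obtain ⟨n, hn2, hnT, hgn⟩ := E.h𝒮 _ hg (by simp)
  have hgeq : g = n := by exact_mod_cast hgn
  have hg2 : 2 ≤ g := hgeq ▸ hn2
  have ht1 : 1 ≤ t := le_trans (by omega) hgt
  have hgm1 : 1 ≤ g - 1 := by omega
  have hgm1T : g - 1 ≤ E.T := by omega
  haveI hP1 : IsProbabilityMeasure (E.μ[|E.cell (g:ℕ∞) 1]) := E.cond_cell_prob _ hg _ le_rfl
  haveI hP0 : IsProbabilityMeasure (E.μ[|E.cell (g:ℕ∞) 0]) :=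
    E.cond_cell_prob _ hg _ (by norm_num)
  haveI hPc1 : IsProbabilityMeasure (E.μ[|E.cell gc 1]) := E.cond_cell_prob _ hgc _ le_rfl
  haveI hPc0 : IsProbabilityMeasure (E.μ[|E.cell gc 0]) := E.cond_cell_prob _ hgc _ (by norm_num)
  have hp_g1 := hSOa _ hg 1 le_rfl
  have hp_g0 := hSOa _ hg 0 (by norm_num)
  have hp_c1 := hSOa _ hgc 1 le_rfl
  have hp_c0 := hSOa _ hgc 0 (by norm_num)
  have hIpo : ∀ (g'' : ℕ∞), g'' ∈ E.𝒮 → ∀ s : ℕ, 1 ≤ s → s ≤ E.T → ∀ (g3 : ℕ∞), g3 ∈ E.𝒮 →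
      ∀ q3 : ℕ, q3 ≤ 1 → Integrable (E.Ypo g'' s) (E.μ[|E.cell g3 q3]) := by
    intro g'' hg'' s hs1 hsT g3 hg3 q3 hq3
    exact E.integrable_cond_of_integrable (E.hYpo g'' hg'' s hs1 hsT)
      (E.cell_ne_zero g3 hg3 q3 hq3)
  have hID : ∀ s : ℕ, 1 ≤ s → s ≤ E.T → ∀ (g3 : ℕ∞), g3 ∈ E.𝒮 → ∀ q3 : ℕ, q3 ≤ 1 →
      Integrable (fun ω => E.Ypo ⊤ s ω - E.Ypo ⊤ (g-1) ω) (E.μ[|E.cell g3 q3]) := by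
    intro s hs1 hsT g3 hg3 q3 hq3
    exact (hIpo ⊤ E.htop s hs1 hsT g3 hg3 q3 hq3).sub
      (hIpo ⊤ E.htop (g-1) hgm1 hgm1T g3 hg3 q3 hq3)
  -- telescoped parallel trends
  have hPTkey : ∀ s : ℕ, g ≤ s → s ≤ t →
      (fun ω => ((E.μ[|E.cell (g:ℕ∞) 1])[fun ω' => E.Ypo ⊤ s ω' - E.Ypo ⊤ (g-1) ω'|E.mX]) ω
          - ((E.μ[|E.cell (g:ℕ∞) 0])[fun ω' => E.Ypo ⊤ s ω' - E.Ypo ⊤ (g-1) ω'|E.mX]) ω)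
        =ᵐ[E.μ]
      (fun ω => ((E.μ[|E.cell gc 1])[fun ω' => E.Ypo ⊤ s ω' - E.Ypo ⊤ (g-1) ω'|E.mX]) ω
          - ((E.μ[|E.cell gc 0])[fun ω' => E.Ypo ⊤ s ω' - E.Ypo ⊤ (g-1) ω'|E.mX]) ω) := by
    intro s hgs
    induction s, hgs using Nat.le_induction with
    | base =>
      intro _hst
      exact hPT g hg gc hgc g le_rfl (le_trans hgt htT)
        (by rw [max_self]; exact lt_of_le_of_lt (Nat.cast_le.2 hgt) hgct)
    | succ s hgs ih =>
      intro hst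
      have hPTs := hPT g hg gc hgc (s+1) (by omega) (by omega)
        (max_lt (lt_of_le_of_lt (Nat.cast_le.2 hgt) hgct)
          (lt_of_le_of_lt (Nat.cast_le.2 hst) hgct))
      simp only [Nat.add_sub_cancel] at hPTs
      have hs1T : s + 1 ≤ E.T := by omega
      have hs1g : 1 ≤ s := by omega
      have hsT : s ≤ E.T := by omega
      have hadd : ∀ (g3 : ℕ∞), g3 ∈ E.𝒮 → ∀ q3 : ℕ, q3 ≤ 1 →
          (∀ᵐ ω ∂E.μ, ε < E.pX g3 q3 ω) →
          ((E.μ[|E.cell g3 q3])[fun ω' => E.Ypo ⊤ (s+1) ω' - E.Ypo ⊤ (g-1) ω'|E.mX]) =ᵐ[E.μ]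
            fun ω => ((E.μ[|E.cell g3 q3])[fun ω' => E.Ypo ⊤ (s+1) ω' - E.Ypo ⊤ s ω'|E.mX]) ω
              + ((E.μ[|E.cell g3 q3])[fun ω' => E.Ypo ⊤ s ω' - E.Ypo ⊤ (g-1) ω'|E.mX]) ω := by
        intro g3 hg3 q3 hq3 hp3
        have hfe : (fun ω' => E.Ypo ⊤ (s+1) ω' - E.Ypo ⊤ (g-1) ω')
            = (fun ω' => E.Ypo ⊤ (s+1) ω' - E.Ypo ⊤ s ω')
              + (fun ω' => E.Ypo ⊤ s ω' - E.Ypo ⊤ (g-1) ω') := by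
          funext ω
          simp only [Pi.add_apply]
          ring
        have h1 : ((E.μ[|E.cell g3 q3])[fun ω' => E.Ypo ⊤ (s+1) ω' - E.Ypo ⊤ (g-1) ω'|E.mX])
            = ((E.μ[|E.cell g3 q3])[(fun ω' => E.Ypo ⊤ (s+1) ω' - E.Ypo ⊤ s ω')
                + (fun ω' => E.Ypo ⊤ s ω' - E.Ypo ⊤ (g-1) ω')|E.mX]) := by
          rw [hfe]
        rw [h1]
        refine E.ae_of_cond_ae g3 hg3 q3 hq3 hε hp3 stronglyMeasurable_condExp
          (stronglyMeasurable_condExp.add stronglyMeasurable_condExp) ?_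
        exact condExp_add ((hIpo ⊤ E.htop (s+1) (by omega) hs1T g3 hg3 q3 hq3).sub
          (hIpo ⊤ E.htop s hs1g hsT g3 hg3 q3 hq3)) (hID s hs1g hsT g3 hg3 q3 hq3) _
      filter_upwards [hadd (g:ℕ∞) hg 1 le_rfl hp_g1, hadd (g:ℕ∞) hg 0 (by norm_num) hp_g0,
        hadd gc hgc 1 le_rfl hp_c1, hadd gc hgc 0 (by norm_num) hp_c0, hPTs, ih (by omega)]
        with ω h1 h2 h3 h4 h5 h6
      linarith
  -- identification of the three regression adjustments
  have hm_g0 : E.mReg g t (g:ℕ∞) 0 =ᵐ[E.μ]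
      (E.μ[|E.cell (g:ℕ∞) 0])[fun ω => E.Ypo ⊤ t ω - E.Ypo ⊤ (g-1) ω|E.mX] := by
    refine E.ae_of_cond_ae _ hg 0 (by norm_num) hε hp_g0 stronglyMeasurable_condExp
      stronglyMeasurable_condExp ?_
    refine condExp_congr_ae ?_
    filter_upwards [E.ae_Yobs_zero (g:ℕ∞) t, E.ae_Yobs_zero (g:ℕ∞) (g-1)] with ω e1 e2
    rw [e1, e2]
  have hm_c0 : E.mReg g t gc 0 =ᵐ[E.μ]
      (E.μ[|E.cell gc 0])[fun ω => E.Ypo ⊤ t ω - E.Ypo ⊤ (g-1) ω|E.mX] := by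
    refine E.ae_of_cond_ae _ hgc 0 (by norm_num) hε hp_c0 stronglyMeasurable_condExp
      stronglyMeasurable_condExp ?_
    refine condExp_congr_ae ?_
    filter_upwards [E.ae_Yobs_zero gc t, E.ae_Yobs_zero gc (g-1)] with ω e1 e2
    rw [e1, e2]
  have hm_c1 : E.mReg g t gc 1 =ᵐ[E.μ]
      (E.μ[|E.cell gc 1])[fun ω => E.Ypo ⊤ t ω - E.Ypo ⊤ (g-1) ω|E.mX] := by
    by_cases hctop : gc = ⊤
    · subst hctop
      refine E.ae_of_cond_ae ⊤ E.htop 1 le_rfl hε hp_c1 stronglyMeasurable_condExp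
        stronglyMeasurable_condExp ?_
      refine condExp_congr_ae ?_
      filter_upwards [E.ae_Yobs_one ⊤ t, E.ae_Yobs_one ⊤ (g-1)] with ω e1 e2
      rw [e1, e2]
    · obtain ⟨m, hm2, hmT, hgcm⟩ := E.h𝒮 gc hgc hctop
      subst hgcm
      have htm : t < m := by exact_mod_cast hgct
      have hg1m : g - 1 < m := by omega
      have e1 : E.mReg g t (m:ℕ∞) 1 =ᵐ[E.μ]
          (E.μ[|E.cell (m:ℕ∞) 1])[fun ω => E.Ypo (m:ℕ∞) t ω - E.Ypo (m:ℕ∞) (g-1) ω|E.mX] := by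
        refine E.ae_of_cond_ae _ hgc 1 le_rfl hε hp_c1 stronglyMeasurable_condExp
          stronglyMeasurable_condExp ?_
        refine condExp_congr_ae ?_
        filter_upwards [E.ae_Yobs_one (m:ℕ∞) t, E.ae_Yobs_one (m:ℕ∞) (g-1)] with ω a1 a2
        rw [a1, a2]
      have e2 : (E.μ[|E.cell (m:ℕ∞) 1])[fun ω => E.Ypo (m:ℕ∞) t ω - E.Ypo (m:ℕ∞) (g-1) ω|E.mX]
          =ᵐ[E.μ] fun ω => ((E.μ[|E.cell (m:ℕ∞) 1])[E.Ypo (m:ℕ∞) t|E.mX]) ω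
              - ((E.μ[|E.cell (m:ℕ∞) 1])[E.Ypo (m:ℕ∞) (g-1)|E.mX]) ω := by
        refine E.ae_of_cond_ae _ hgc 1 le_rfl hε hp_c1 stronglyMeasurable_condExp
          (stronglyMeasurable_condExp.sub stronglyMeasurable_condExp) ?_
        exact condExp_sub (hIpo (m:ℕ∞) hgc t ht1 htT (m:ℕ∞) hgc 1 le_rfl)
          (hIpo (m:ℕ∞) hgc (g-1) hgm1 hgm1T (m:ℕ∞) hgc 1 le_rfl) _
      have e3 := hNA m hgc t ht1 htm
      have e4 := hNA m hgc (g-1) hgm1 hg1m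
      have e5 : (fun ω => ((E.μ[|E.cell (m:ℕ∞) 1])[E.Ypo ⊤ t|E.mX]) ω
              - ((E.μ[|E.cell (m:ℕ∞) 1])[E.Ypo ⊤ (g-1)|E.mX]) ω)
          =ᵐ[E.μ] (E.μ[|E.cell (m:ℕ∞) 1])[fun ω => E.Ypo ⊤ t ω - E.Ypo ⊤ (g-1) ω|E.mX] := by
        refine E.ae_of_cond_ae _ hgc 1 le_rfl hε hp_c1
          (stronglyMeasurable_condExp.sub stronglyMeasurable_condExp)
          stronglyMeasurable_condExp ?_
        exact (condExp_sub (hIpo ⊤ E.htop t ht1 htT (m:ℕ∞) hgc 1 le_rfl)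
          (hIpo ⊤ E.htop (g-1) hgm1 hgm1T (m:ℕ∞) hgc 1 le_rfl) _).symm
      filter_upwards [e1, e2, e3, e4, e5] with ω a1 a2 a3 a4 a5
      linarith
  have hstar : (fun ω => E.mReg g t (g:ℕ∞) 0 ω + E.mReg g t gc 1 ω - E.mReg g t gc 0 ω)
      =ᵐ[E.μ] (E.μ[|E.cell (g:ℕ∞) 1])[fun ω => E.Ypo ⊤ t ω - E.Ypo ⊤ (g-1) ω|E.mX] := by
    filter_upwards [hm_g0, hm_c1, hm_c0, hPTkey t hgt le_rfl] with ω a1 a2 a3 a4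
    linarith
  have hAC : (E.μ[|E.cell (g:ℕ∞) 1]) ≪ E.μ := ProbabilityTheory.cond_absolutelyContinuous
  -- the first identity
  have hstep1 : ∫ ω, (E.Yobs t ω - E.Yobs (g - 1) ω - E.mReg g t (g:ℕ∞) 0 ω
      - E.mReg g t gc 1 ω + E.mReg g t gc 0 ω) ∂(E.μ[|E.cell (g:ℕ∞) 1])
      = ∫ ω, (E.Ypo (g:ℕ∞) t ω - E.Ypo (g:ℕ∞) (g-1) ω
          - ((E.μ[|E.cell (g:ℕ∞) 1])[fun ω' => E.Ypo ⊤ t ω' - E.Ypo ⊤ (g-1) ω'|E.mX]) ω)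
        ∂(E.μ[|E.cell (g:ℕ∞) 1]) := by
    refine integral_congr_ae ?_
    filter_upwards [E.ae_Yobs_one (g:ℕ∞) t, E.ae_Yobs_one (g:ℕ∞) (g-1), hAC.ae_eq hstar]
      with ω a1 a2 a3
    rw [a1, a2]
    linarith
  have hIg_t := hIpo (g:ℕ∞) hg t ht1 htT (g:ℕ∞) hg 1 le_rfl
  have hIg_g1 := hIpo (g:ℕ∞) hg (g-1) hgm1 hgm1T (g:ℕ∞) hg 1 le_rfl
  have hIT_t := hIpo ⊤ E.htop t ht1 htT (g:ℕ∞) hg 1 le_rfl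
  have hIT_g1 := hIpo ⊤ E.htop (g-1) hgm1 hgm1T (g:ℕ∞) hg 1 le_rfl
  have hsplit : ∫ ω, (E.Ypo (g:ℕ∞) t ω - E.Ypo (g:ℕ∞) (g-1) ω
          - ((E.μ[|E.cell (g:ℕ∞) 1])[fun ω' => E.Ypo ⊤ t ω' - E.Ypo ⊤ (g-1) ω'|E.mX]) ω)
        ∂(E.μ[|E.cell (g:ℕ∞) 1])
      = (∫ ω, E.Ypo (g:ℕ∞) t ω ∂(E.μ[|E.cell (g:ℕ∞) 1]))
        - (∫ ω, E.Ypo (g:ℕ∞) (g-1) ω ∂(E.μ[|E.cell (g:ℕ∞) 1]))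
        - ∫ ω, ((E.μ[|E.cell (g:ℕ∞) 1])[fun ω' => E.Ypo ⊤ t ω' - E.Ypo ⊤ (g-1) ω'|E.mX]) ω
            ∂(E.μ[|E.cell (g:ℕ∞) 1]) := by
    have hsubI : Integrable (fun ω => E.Ypo (g:ℕ∞) t ω - E.Ypo (g:ℕ∞) (g-1) ω)
        (E.μ[|E.cell (g:ℕ∞) 1]) := hIg_t.sub hIg_g1
    have h1 : ∫ ω, (E.Ypo (g:ℕ∞) t ω - E.Ypo (g:ℕ∞) (g-1) ω
          - ((E.μ[|E.cell (g:ℕ∞) 1])[fun ω' => E.Ypo ⊤ t ω' - E.Ypo ⊤ (g-1) ω'|E.mX]) ω)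
        ∂(E.μ[|E.cell (g:ℕ∞) 1])
        = (∫ ω, (E.Ypo (g:ℕ∞) t ω - E.Ypo (g:ℕ∞) (g-1) ω) ∂(E.μ[|E.cell (g:ℕ∞) 1]))
          - ∫ ω, ((E.μ[|E.cell (g:ℕ∞) 1])[fun ω' => E.Ypo ⊤ t ω' - E.Ypo ⊤ (g-1) ω'|E.mX]) ω
              ∂(E.μ[|E.cell (g:ℕ∞) 1]) := integral_sub hsubI integrable_condExp
    have h2 : ∫ ω, (E.Ypo (g:ℕ∞) t ω - E.Ypo (g:ℕ∞) (g-1) ω) ∂(E.μ[|E.cell (g:ℕ∞) 1])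
        = (∫ ω, E.Ypo (g:ℕ∞) t ω ∂(E.μ[|E.cell (g:ℕ∞) 1]))
          - ∫ ω, E.Ypo (g:ℕ∞) (g-1) ω ∂(E.μ[|E.cell (g:ℕ∞) 1]) := integral_sub hIg_t hIg_g1
    rw [h1, h2]
  have htower : ∫ ω, ((E.μ[|E.cell (g:ℕ∞) 1])[fun ω' => E.Ypo ⊤ t ω' - E.Ypo ⊤ (g-1) ω'|E.mX]) ω
        ∂(E.μ[|E.cell (g:ℕ∞) 1])
      = (∫ ω, E.Ypo ⊤ t ω ∂(E.μ[|E.cell (g:ℕ∞) 1]))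
        - ∫ ω, E.Ypo ⊤ (g-1) ω ∂(E.μ[|E.cell (g:ℕ∞) 1]) := by
    have h0 : ∫ ω, ((E.μ[|E.cell (g:ℕ∞) 1])[fun ω' => E.Ypo ⊤ t ω' - E.Ypo ⊤ (g-1) ω'|E.mX]) ω
          ∂(E.μ[|E.cell (g:ℕ∞) 1])
        = ∫ ω, (E.Ypo ⊤ t ω - E.Ypo ⊤ (g-1) ω) ∂(E.μ[|E.cell (g:ℕ∞) 1]) :=
      integral_condExp E.mX_le
    have h4 : ∫ ω, (E.Ypo ⊤ t ω - E.Ypo ⊤ (g-1) ω) ∂(E.μ[|E.cell (g:ℕ∞) 1])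
        = (∫ ω, E.Ypo ⊤ t ω ∂(E.μ[|E.cell (g:ℕ∞) 1]))
          - ∫ ω, E.Ypo ⊤ (g-1) ω ∂(E.μ[|E.cell (g:ℕ∞) 1]) := integral_sub hIT_t hIT_g1
    rw [h0, h4]
  have hna : ∫ ω, E.Ypo (g:ℕ∞) (g-1) ω ∂(E.μ[|E.cell (g:ℕ∞) 1])
      = ∫ ω, E.Ypo ⊤ (g-1) ω ∂(E.μ[|E.cell (g:ℕ∞) 1]) := by
    have t1 : ∫ ω, ((E.μ[|E.cell (g:ℕ∞) 1])[E.Ypo (g:ℕ∞) (g-1)|E.mX]) ω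
          ∂(E.μ[|E.cell (g:ℕ∞) 1])
        = ∫ ω, E.Ypo (g:ℕ∞) (g-1) ω ∂(E.μ[|E.cell (g:ℕ∞) 1]) := integral_condExp E.mX_le
    have t2 : ∫ ω, ((E.μ[|E.cell (g:ℕ∞) 1])[E.Ypo ⊤ (g-1)|E.mX]) ω ∂(E.μ[|E.cell (g:ℕ∞) 1])
        = ∫ ω, E.Ypo ⊤ (g-1) ω ∂(E.μ[|E.cell (g:ℕ∞) 1]) := integral_condExp E.mX_le
    have t3 : ∫ ω, ((E.μ[|E.cell (g:ℕ∞) 1])[E.Ypo (g:ℕ∞) (g-1)|E.mX]) ω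
          ∂(E.μ[|E.cell (g:ℕ∞) 1])
        = ∫ ω, ((E.μ[|E.cell (g:ℕ∞) 1])[E.Ypo ⊤ (g-1)|E.mX]) ω ∂(E.μ[|E.cell (g:ℕ∞) 1]) :=
      integral_congr_ae (hAC.ae_eq (hNA g hg (g-1) hgm1 (by omega)))
    linarith
  have hATT : E.ATT g t = (∫ ω, E.Ypo (g:ℕ∞) t ω ∂(E.μ[|E.cell (g:ℕ∞) 1]))
      - ∫ ω, E.Ypo ⊤ t ω ∂(E.μ[|E.cell (g:ℕ∞) 1]) := by
    have hd : E.ATT g t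
        = ∫ ω, (E.Ypo (g:ℕ∞) t ω - E.Ypo ⊤ t ω) ∂(E.μ[|E.cell (g:ℕ∞) 1]) := rfl
    have h5 : ∫ ω, (E.Ypo (g:ℕ∞) t ω - E.Ypo ⊤ t ω) ∂(E.μ[|E.cell (g:ℕ∞) 1])
        = (∫ ω, E.Ypo (g:ℕ∞) t ω ∂(E.μ[|E.cell (g:ℕ∞) 1]))
          - ∫ ω, E.Ypo ⊤ t ω ∂(E.μ[|E.cell (g:ℕ∞) 1]) := integral_sub hIg_t hIT_t
    rw [hd, h5]
  have hfirst : E.ATT g t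
      = ∫ ω, (E.Yobs t ω - E.Yobs (g - 1) ω - E.mReg g t (g:ℕ∞) 0 ω
          - E.mReg g t gc 1 ω + E.mReg g t gc 0 ω) ∂(E.μ[|E.cell (g:ℕ∞) 1]) := by
    rw [hstep1, hsplit, htower, hATT, hna]
    ring
  refine ⟨hfirst, ?_⟩
  symm
  -- the second identity
  have hmint : ∀ (g3 : ℕ∞), g3 ∈ E.𝒮 → ∀ q3 : ℕ, q3 ≤ 1 → (∀ᵐ ω ∂E.μ, ε < E.pX g3 q3 ω) →
      Integrable (E.mReg g t g3 q3) E.μ := by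
    intro g3 hg3 q3 hq3 hp3
    exact E.integrable_of_cond_integrable g3 hg3 q3 hq3 hε hp3 stronglyMeasurable_condExp
      integrable_condExp
  have hFint : Integrable (fun ω => E.Yobs t ω - E.Yobs (g - 1) ω - E.mReg g t (g:ℕ∞) 0 ω
      - E.mReg g t gc 1 ω + E.mReg g t gc 0 ω) E.μ :=
    ((((E.integrable_Yobs t ht1 htT).sub (E.integrable_Yobs (g-1) hgm1 hgm1T)).sub
      (hmint (g:ℕ∞) hg 0 (by norm_num) hp_g0)).sub (hmint gc hgc 1 le_rfl hp_c1)).add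
      (hmint gc hgc 0 (by norm_num) hp_c0)
  have hAm : MeasurableSet (E.cell (g:ℕ∞) 1) := E.measurableSet_cell _ 1
  have hwt : ∀ ω, E.wTrt g ω * (E.Yobs t ω - E.Yobs (g - 1) ω - E.mReg g t (g:ℕ∞) 0 ω
        - E.mReg g t gc 1 ω + E.mReg g t gc 0 ω)
      = (E.μ (E.cell (g:ℕ∞) 1)).toReal⁻¹
        * (E.cell (g:ℕ∞) 1).indicator (fun ω' => E.Yobs t ω' - E.Yobs (g - 1) ω'
            - E.mReg g t (g:ℕ∞) 0 ω' - E.mReg g t gc 1 ω' + E.mReg g t gc 0 ω') ω := by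
    intro ω
    by_cases hω : ω ∈ E.cell (g:ℕ∞) 1 <;>
      simp [Setup.wTrt, hω, div_eq_mul_inv] <;> ring
  calc ∫ ω, E.wTrt g ω * (E.Yobs t ω - E.Yobs (g - 1) ω - E.mReg g t (g:ℕ∞) 0 ω
        - E.mReg g t gc 1 ω + E.mReg g t gc 0 ω) ∂E.μ
      = ∫ ω, (E.μ (E.cell (g:ℕ∞) 1)).toReal⁻¹
          * (E.cell (g:ℕ∞) 1).indicator (fun ω' => E.Yobs t ω' - E.Yobs (g - 1) ω'
              - E.mReg g t (g:ℕ∞) 0 ω' - E.mReg g t gc 1 ω' + E.mReg g t gc 0 ω') ω ∂E.μ := by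
        exact integral_congr_ae (Filter.Eventually.of_forall hwt)
    _ = (E.μ (E.cell (g:ℕ∞) 1)).toReal⁻¹
          * ∫ ω, (E.cell (g:ℕ∞) 1).indicator (fun ω' => E.Yobs t ω' - E.Yobs (g - 1) ω'
              - E.mReg g t (g:ℕ∞) 0 ω' - E.mReg g t gc 1 ω' + E.mReg g t gc 0 ω') ω ∂E.μ := by
        exact integral_const_mul _ _
    _ = (E.μ (E.cell (g:ℕ∞) 1)).toReal⁻¹
          * ∫ ω in E.cell (g:ℕ∞) 1, (E.Yobs t ω - E.Yobs (g - 1) ω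
              - E.mReg g t (g:ℕ∞) 0 ω - E.mReg g t gc 1 ω + E.mReg g t gc 0 ω) ∂E.μ := by
        rw [integral_indicator hAm]
    _ = ∫ ω, (E.Yobs t ω - E.Yobs (g - 1) ω - E.mReg g t (g:ℕ∞) 0 ω
          - E.mReg g t gc 1 ω + E.mReg g t gc 0 ω) ∂(E.μ[|E.cell (g:ℕ∞) 1]) := by
        rw [ProbabilityTheory.cond, integral_smul_measure, ENNReal.toReal_inv, smul_eq_mul]
    _ = E.ATT g t := hfirst.symm
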